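/- Let Γ be a finite connected tetravalent graph, G ≤ Aut(Γ) with Γ G-arc-transitive, and u a vertex of Γ. Suppose M is a subgroup of G maximal subject to Γ being M-half-arc-transitive, and suppose M_u^{Γ(u)} is a normal subgroup of G_u^{Γ(u)}. Then the indices satisfy |G : M| = |G_u : M_u| = |G_u^{Γ(u)} : M_u^{Γ(u)}|. -/

import Mathlib

open SimpleGraph

variable {V : Type*}

/-- The automorphism group of a simple graph, as a subgroup of the group of
permutations of the vertex set. -/
def autGroup (Γ : SimpleGraph V) : Subgroup (Equiv.Perm V) where
  carrier := {g | ∀ u v : V, Γ.Adj (g u) (g v) ↔ Γ.Adj u v}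
  one_mem' := by intro u v; simp
  mul_mem' := by
    intro a b ha hb u v
    rw [Equiv.Perm.mul_apply, Equiv.Perm.mul_apply, ha, hb]
  inv_mem' := by
    intro a ha u v
    simpa using (ha (a⁻¹ u) (a⁻¹ v)).symm

/-- `M` is transitive on the vertices of a graph on `V`. -/
def VertexTransitive (_Γ : SimpleGraph V) (M : Subgroup (Equiv.Perm V)) : Prop :=
  ∀ u v : V, ∃ g ∈ M, g u = v

/-- `M` is transitive on the edges of `Γ`. -/
def EdgeTransitive (Γ : SimpleGraph V) (M : Subgroup (Equiv.Perm V)) : Prop :=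
  ∀ u v x y : V, Γ.Adj u v → Γ.Adj x y →
    ∃ g ∈ M, (g u = x ∧ g v = y) ∨ (g u = y ∧ g v = x)

/-- `M` is transitive on the arcs (ordered pairs of adjacent vertices) of `Γ`. -/
def ArcTransitive (Γ : SimpleGraph V) (M : Subgroup (Equiv.Perm V)) : Prop :=
  ∀ u v x y : V, Γ.Adj u v → Γ.Adj x y → ∃ g ∈ M, g u = x ∧ g v = y

/-- `Γ` is `M`-half-arc-transitive: `M` consists of automorphisms of `Γ` and is
vertex- and edge- but not arc-transitive. -/
def HalfArcTransitive (Γ : SimpleGraph V) (M : Subgroup (Equiv.Perm V)) : Prop :=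
  M ≤ autGroup Γ ∧ VertexTransitive Γ M ∧ EdgeTransitive Γ M ∧ ¬ ArcTransitive Γ M

/-- `p`, restricted to `{0, …, s}`, is an `s`-arc of `Γ`. -/
def IsSArc (Γ : SimpleGraph V) (s : ℕ) (p : ℕ → V) : Prop :=
  (∀ i < s, Γ.Adj (p i) (p (i + 1))) ∧ ∀ j, 1 ≤ j → j < s → p (j - 1) ≠ p (j + 1)

/-- `Γ` is `(H, t)`-arc-transitive: `H` consists of automorphisms of `Γ` and is
transitive on the `t`-arcs of `Γ`. -/
def SArcTransitive (Γ : SimpleGraph V) (H : Subgroup (Equiv.Perm V)) (t : ℕ) : Prop :=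
  H ≤ autGroup Γ ∧ ∀ p q : ℕ → V, IsSArc Γ t p → IsSArc Γ t q →
    ∃ g ∈ H, ∀ i ≤ t, g (p i) = q i

/-- `Γ` is `(H, t)`-transitive: `(H, t)`-arc-transitive but not `(H, t+1)`-arc-transitive. -/
def STransitive (Γ : SimpleGraph V) (H : Subgroup (Equiv.Perm V)) (t : ℕ) : Prop :=
  SArcTransitive Γ H t ∧ ¬ SArcTransitive Γ H (t + 1)

/-- `M` is a maximal subgroup of `H`. -/
def IsMaximalSubgroup {G : Type*} [Group G] (M H : Subgroup G) : Prop :=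
  M < H ∧ ∀ N : Subgroup G, M ≤ N → N ≤ H → N = M ∨ N = H

/-- `(M, H)` is a maximal `(1/2, t)`-pair of `Γ`: `M` is a maximal subgroup of `H`,
`Γ` is `M`-half-arc-transitive, and `Γ` is `(H, t)`-transitive. -/
def MaximalHalfPair (Γ : SimpleGraph V) (M H : Subgroup (Equiv.Perm V)) (t : ℕ) : Prop :=
  IsMaximalSubgroup M H ∧ HalfArcTransitive Γ M ∧ STransitive Γ H t

/-- `Γ` is regular of valency `4`. -/
def Tetravalent (Γ : SimpleGraph V) : Prop := ∀ v : V, (Γ.neighborSet v).ncard = 4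

/-- `M` is a normal subgroup of `H` (both given as subgroups of an ambient group). -/
def NormalIn {G : Type*} [Group G] (M H : Subgroup G) : Prop :=
  ∀ h ∈ H, ∀ m ∈ M, h * m * h⁻¹ ∈ M

/-- The normal core of `M` in `H` (for `M ≤ H`): the largest normal subgroup of `H`
contained in `M`, namely the intersection of the `H`-conjugates of `M`. -/
def coreIn {G : Type*} [Group G] (H M : Subgroup G) : Subgroup G where
  carrier := {g | ∀ h ∈ H, h⁻¹ * g * h ∈ M}
  one_mem' := by intro h hh; simpa using M.one_mem
  mul_mem' := by
    intro a b ha hb h hh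
    have e : h⁻¹ * (a * b) * h = (h⁻¹ * a * h) * (h⁻¹ * b * h) := by group
    rw [e]; exact M.mul_mem (ha h hh) (hb h hh)
  inv_mem' := by
    intro a ha h hh
    have e : h⁻¹ * a⁻¹ * h = (h⁻¹ * a * h)⁻¹ := by group
    rw [e]; exact M.inv_mem (ha h hh)

/-- `K` is semiregular on `V`: all point stabilizers are trivial. -/
def Semiregular (K : Subgroup (Equiv.Perm V)) : Prop :=
  ∀ g ∈ K, ∀ v : V, g v = v → g = 1

/-- The normal quotient graph `Γ_K`: vertices are the `K`-orbits on `V`, two distinct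
orbits being adjacent iff `Γ` has an edge between them. -/
def quotientGraph (Γ : SimpleGraph V) (K : Subgroup (Equiv.Perm V)) :
    SimpleGraph (Quotient (MulAction.orbitRel K V)) where
  Adj x y := x ≠ y ∧ ∃ u v : V, Γ.Adj u v ∧
      Quotient.mk (MulAction.orbitRel K V) u = x ∧ Quotient.mk (MulAction.orbitRel K V) v = y
  symm := by
    constructor
    rintro x y ⟨hxy, u, v, h, hu, hv⟩
    exact ⟨hxy.symm, v, u, h.symm, hv, hu⟩
  loopless := ⟨fun x h => h.1 rfl⟩

/-- The set of elements of `H` stabilizing every `K`-orbit, i.e. the kernel of the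
action of `H` on the vertex set of the normal quotient graph `Γ_K`. -/
def quotKernelSet (H K : Subgroup (Equiv.Perm V)) : Set (Equiv.Perm V) :=
  {h | h ∈ H ∧ ∀ v : V, h v ∈ MulAction.orbit K v}

/-- The permutation group induced by `H` on the set of `K`-orbits; when `K` is the
kernel of the action of `H` on the set of `K`-orbits, this is (a faithful copy of)
the quotient group `H/K` acting on the normal quotient graph `Γ_K`. -/
def inducedQuot (K H : Subgroup (Equiv.Perm V)) :
    Subgroup (Equiv.Perm (Quotient (MulAction.orbitRel K V))) where
  carrier := {σ | ∃ h ∈ H, ∀ v : V,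
    σ (Quotient.mk (MulAction.orbitRel K V) v) = Quotient.mk (MulAction.orbitRel K V) (h v)}
  one_mem' := ⟨1, H.one_mem, fun v => by simp⟩
  mul_mem' := by
    rintro σ τ ⟨g, hg, hσ⟩ ⟨k, hk, hτ⟩
    refine ⟨g * k, H.mul_mem hg hk, fun v => ?_⟩
    rw [Equiv.Perm.mul_apply, hτ v, hσ (k v), Equiv.Perm.mul_apply]
  inv_mem' := by
    rintro σ ⟨g, hg, hσ⟩
    refine ⟨g⁻¹, H.inv_mem hg, fun v => ?_⟩
    have h1 := hσ (g⁻¹ v)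
    simp only [Equiv.Perm.coe_inv, Equiv.apply_symm_apply] at h1
    rw [← h1]; simp only [Equiv.Perm.coe_inv, Equiv.symm_apply_apply]

/-- The permutation group `M_u^{Γ(u)}` induced on the neighbourhood `Γ(u)` by the
vertex stabilizer `M_u`. -/
def localGroup (Γ : SimpleGraph V) (M : Subgroup (Equiv.Perm V)) (u : V) :
    Subgroup (Equiv.Perm (Γ.neighborSet u)) where
  carrier := {σ | ∃ g ∈ M, g u = u ∧ ∀ v : Γ.neighborSet u, (σ v : V) = g (v : V)}
  one_mem' := ⟨1, M.one_mem, by simp, fun v => by simp⟩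
  mul_mem' := by
    rintro σ τ ⟨g, hg, hgu, hσ⟩ ⟨k, hk, hku, hτ⟩
    refine ⟨g * k, M.mul_mem hg hk, by rw [Equiv.Perm.mul_apply, hku, hgu], fun v => ?_⟩
    simp only [Equiv.Perm.mul_apply]
    rw [hσ (τ v), hτ v]
  inv_mem' := by
    rintro σ ⟨g, hg, hgu, hσ⟩
    have hgu' : g⁻¹ u = u := g.injective (by simp only [Equiv.Perm.coe_inv, Equiv.apply_symm_apply, hgu])
    refine ⟨g⁻¹, M.inv_mem hg, hgu', fun v => ?_⟩
    have h1 := hσ (σ⁻¹ v)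
    simp only [Equiv.Perm.coe_inv, Equiv.apply_symm_apply] at h1 ⊢
    rw [h1, Equiv.symm_apply_apply]

/-- The kernel `M_u^{[1]}` of the action of the vertex stabilizer `M_u` on the
neighbourhood `Γ(u)`, as a subgroup of `Equiv.Perm V`. -/
def localKernel (Γ : SimpleGraph V) (M : Subgroup (Equiv.Perm V)) (u : V) :
    Subgroup (Equiv.Perm V) :=
  (M ⊓ MulAction.stabilizer (Equiv.Perm V) u) ⊓
    ⨅ v ∈ Γ.neighborSet u, MulAction.stabilizer (Equiv.Perm V) v

/-- The complete bipartite graph `K_{5,5}` minus a perfect matching. -/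
def K55minusMatching : SimpleGraph (Fin 2 × Fin 5) where
  Adj x y := x.1 ≠ y.1 ∧ x.2 ≠ y.2
  symm := by constructor; rintro x y ⟨h1, h2⟩; exact ⟨h1.symm, h2.symm⟩
  loopless := ⟨fun x h => h.1 rfl⟩

instance : Fact (Nat.Prime 5) := ⟨by norm_num⟩
instance : Fact (Nat.Prime 7) := ⟨by norm_num⟩

/-- The one-dimensional affine group `AGL_1(p)`: the group of affine permutations
`x ↦ a * x + b` (`a ≠ 0`) of `ZMod p`.  It is isomorphic to `Z_p ⋊ Z_{p-1}` with the
faithful action; for `p = 5` it is the Frobenius group `Z_5 ⋊ Z_4` of order `20`. -/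
def AGL1 (p : ℕ) [Fact (Nat.Prime p)] : Subgroup (Equiv.Perm (ZMod p)) where
  carrier := {f | ∃ a b : ZMod p, a ≠ 0 ∧ ∀ x, f x = a * x + b}
  one_mem' := ⟨1, 0, one_ne_zero, fun x => by simp⟩
  mul_mem' := by
    rintro f g ⟨a1, b1, ha1, hf⟩ ⟨a2, b2, ha2, hg⟩
    refine ⟨a1 * a2, a1 * b2 + b1, mul_ne_zero ha1 ha2, fun x => ?_⟩
    rw [Equiv.Perm.mul_apply, hg, hf]
    ring
  inv_mem' := by
    rintro f ⟨a, b, ha, hf⟩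
    refine ⟨a⁻¹, -(a⁻¹ * b), inv_ne_zero ha, fun x => ?_⟩
    have h1 : f (a⁻¹ * x + -(a⁻¹ * b)) = x := by
      rw [hf]
      field_simp
      ring
    rw [← h1, Equiv.Perm.coe_inv, Equiv.symm_apply_apply, h1]

/-- The Cayley graph `Cay(G, S)`: for an inverse-closed `S ⊆ G \ {1}`, `x` and `y`
are adjacent iff `y * x⁻¹ ∈ S`. -/
def cayleyGraph (G : Type*) [Group G] (S : Set G) : SimpleGraph G :=
  SimpleGraph.fromRel (fun x y => y * x⁻¹ ∈ S)

/-- The image `R(G)` of the right regular representation of `G` in `Equiv.Perm G`. -/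
def rightRegular (G : Type*) [Group G] : Subgroup (Equiv.Perm G) where
  carrier := {σ | ∃ g : G, ∀ x : G, σ x = x * g}
  one_mem' := ⟨1, fun x => by simp⟩
  mul_mem' := by
    rintro σ τ ⟨g, hσ⟩ ⟨k, hτ⟩
    exact ⟨k * g, fun x => by rw [Equiv.Perm.mul_apply, hτ, hσ, mul_assoc]⟩
  inv_mem' := by
    rintro σ ⟨g, hσ⟩
    refine ⟨g⁻¹, fun x => ?_⟩
    have h1 : σ (x * g⁻¹) = x := by rw [hσ, inv_mul_cancel_right]
    rw [← h1, Equiv.Perm.coe_inv, Equiv.symm_apply_apply, h1]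

/-- The coordinate-swapping automorphism of `A × A`. -/
def swapAut (A : Type*) [Group A] : MulAut (A × A) := MulEquiv.prodComm

lemma swapAut_sq (A : Type*) [Group A] : swapAut A ^ 2 = 1 := by
  rw [pow_two]
  exact MulEquiv.ext fun p => rfl

/-- The homomorphism `Z_2 →* Aut(A × A)` sending the generator to the coordinate swap. -/
def swapHom (A : Type*) [Group A] : Multiplicative (ZMod 2) →* MulAut (A × A) where
  toFun x := swapAut A ^ (Multiplicative.toAdd x).val
  map_one' := by simp
  map_mul' x y := by
    have h2 : swapAut A ^ 2 = 1 := swapAut_sq A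
    show swapAut A ^ (Multiplicative.toAdd (x * y)).val = _
    have e : Multiplicative.toAdd (x * y) = Multiplicative.toAdd x + Multiplicative.toAdd y := rfl
    rw [e, ZMod.val_add, ← pow_eq_pow_mod _ h2, pow_add]

/-- The semidirect product `(A × A) ⋊ Z_2` in which `Z_2` swaps the two direct
factors; for a group `A` this is the wreath product `A ≀ Z_2`. -/
abbrev wreathZ2 (A : Type*) [Group A] :=
  SemidirectProduct (A × A) (Multiplicative (ZMod 2)) (swapHom A)

/-- The projective general linear group `PGL_2(7) = GL_2(7)/Z(GL_2(7))`. -/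
abbrev PGL2_7 :=
  Matrix.GeneralLinearGroup (Fin 2) (ZMod 7) ⧸
    Subgroup.center (Matrix.GeneralLinearGroup (Fin 2) (ZMod 7))

/-- The semidirect product `Z_3 ⋊ S_4` of order 72 in which the kernel of the action
of `S_4` on `Z_3` is `A_4`: concretely, the subgroup of `S_3 × S_4` consisting of the
pairs of permutations of equal sign. -/
def Z3rtimesS4 : Subgroup (Equiv.Perm (Fin 3) × Equiv.Perm (Fin 4)) :=
  MonoidHom.ker ((Equiv.Perm.sign.comp (MonoidHom.fst (Equiv.Perm (Fin 3)) (Equiv.Perm (Fin 4)))) *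
    (Equiv.Perm.sign.comp (MonoidHom.snd (Equiv.Perm (Fin 3)) (Equiv.Perm (Fin 4)))))

/-- `C` is (the vertex set of) an `M`-alternating cycle of `Γ`: a cycle along which
any two consecutive arcs lie in different `M`-orbits, i.e. consecutive edges have
opposite orientations in the orientations of `Γ` given by the two `M`-orbits on arcs. -/
def IsAltCycle (Γ : SimpleGraph V) (M : Subgroup (Equiv.Perm V)) (C : Set V) : Prop :=
  ∃ n : ℕ, 3 ≤ n ∧ ∃ c : ZMod n → V, Function.Injective c ∧ Set.range c = C ∧
    (∀ i, Γ.Adj (c i) (c (i + 1))) ∧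
    (∀ i, ¬ ∃ g ∈ M, g (c i) = c (i + 1) ∧ g (c (i + 1)) = c (i + 2))

/-- The graph `Alt_M(Γ)` of `M`-alternating cycles: vertices are the `M`-alternating
cycles of `Γ`, two of them being adjacent iff they have a common vertex. -/
def altGraph (Γ : SimpleGraph V) (M : Subgroup (Equiv.Perm V)) :
    SimpleGraph {C : Set V // IsAltCycle Γ M C} where
  Adj C D := C ≠ D ∧ (C.1 ∩ D.1).Nonempty
  symm := by
    constructor
    rintro C D ⟨h1, x, hx⟩
    exact ⟨h1.symm, x, hx.2, hx.1⟩
  loopless := ⟨fun C h => h.1 rfl⟩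

theorem Equiv.Perm.apply_inv_self {α : Type*} (f : Equiv.Perm α) (x : α) : f (f⁻¹ x) = x :=
  f.apply_symm_apply x

theorem Equiv.Perm.inv_apply_self {α : Type*} (f : Equiv.Perm α) (x : α) : f⁻¹ (f x) = x :=
  f.symm_apply_apply x


namespace HAT6

variable {V : Type*}

/-- The `M`-orbit of the arc `(u, b0)`. -/
def Dset (M : Subgroup (Equiv.Perm V)) (u b0 : V) : Set (V × V) :=
  {p | ∃ m ∈ M, m u = p.1 ∧ m b0 = p.2}

/-- Out-neighbours of `v` in the orientation `Dset`. -/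
def OutS (M : Subgroup (Equiv.Perm V)) (u b0 v : V) : Set V := {y | (v, y) ∈ Dset M u b0}

/-- In-neighbours of `v` in the orientation `Dset`. -/
def InS (M : Subgroup (Equiv.Perm V)) (u b0 v : V) : Set V := {y | (y, v) ∈ Dset M u b0}

/-- Bundle of hypotheses. -/
structure Setup (Γ : SimpleGraph V) (G M : Subgroup (Equiv.Perm V)) (u b0 : V) : Prop where
  adj : Γ.Adj u b0
  hG : G ≤ autGroup Γ
  hMG : M ≤ G
  hVT : VertexTransitive Γ M
  hET : EdgeTransitive Γ M
  hNAT : ¬ ArcTransitive Γ M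
  hnorm : NormalIn (localGroup Γ M u) (localGroup Γ G u)

variable {Γ : SimpleGraph V} {G M : Subgroup (Equiv.Perm V)} {u b0 : V}

theorem Setup.hMaut (h : Setup Γ G M u b0) : M ≤ autGroup Γ := h.hMG.trans h.hG

theorem mem_D_adj (h : Setup Γ G M u b0) {x y : V} (hxy : (x, y) ∈ Dset M u b0) :
    Γ.Adj x y := by
  obtain ⟨m, hm, h1, h2⟩ := hxy
  simp only at h1 h2
  subst h1; subst h2
  exact (h.hMaut hm u b0).mpr h.adj

theorem D_total (h : Setup Γ G M u b0) {x y : V} (hxy : Γ.Adj x y) :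
    (x, y) ∈ Dset M u b0 ∨ (y, x) ∈ Dset M u b0 := by
  obtain ⟨g, hg, hc⟩ := h.hET u b0 x y h.adj hxy
  rcases hc with ⟨h1, h2⟩ | ⟨h1, h2⟩
  · exact Or.inl ⟨g, hg, h1, h2⟩
  · exact Or.inr ⟨g, hg, h1, h2⟩

theorem rev_to_AT (h : Setup Γ G M u b0) {r : Equiv.Perm V} (hr : r ∈ M)
    (h1 : r u = b0) (h2 : r b0 = u) : ArcTransitive Γ M := by
  have key : ∀ x y : V, Γ.Adj x y → ∃ g ∈ M, g x = u ∧ g y = b0 := by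
    intro x y hxy
    obtain ⟨g, hg, hc⟩ := h.hET x y u b0 hxy h.adj
    rcases hc with ⟨ha, hb⟩ | ⟨ha, hb⟩
    · exact ⟨g, hg, ha, hb⟩
    · exact ⟨r * g, M.mul_mem hr hg,
        by rw [Equiv.Perm.mul_apply, ha, h2], by rw [Equiv.Perm.mul_apply, hb, h1]⟩
  intro x y z w hxy hzw
  obtain ⟨g1, hg1, e1, e2⟩ := key x y hxy
  obtain ⟨g2, hg2, f1, f2⟩ := key z w hzw
  refine ⟨g2⁻¹ * g1, M.mul_mem (M.inv_mem hg2) hg1, ?_, ?_⟩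
  · rw [Equiv.Perm.mul_apply, e1, ← f1, Equiv.Perm.inv_apply_self]
  · rw [Equiv.Perm.mul_apply, e2, ← f2, Equiv.Perm.inv_apply_self]

theorem D_antisym (h : Setup Γ G M u b0) {x y : V} (h1 : (x, y) ∈ Dset M u b0)
    (h2 : (y, x) ∈ Dset M u b0) : False := by
  obtain ⟨m1, hm1, a1, a2⟩ := h1
  obtain ⟨m2, hm2, b1, b2⟩ := h2
  simp only at a1 a2 b1 b2
  apply h.hNAT
  refine rev_to_AT h (M.mul_mem (M.inv_mem hm1) hm2) ?_ ?_
  · rw [Equiv.Perm.mul_apply, b1, ← a2, Equiv.Perm.inv_apply_self]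
  · rw [Equiv.Perm.mul_apply, b2, ← a1, Equiv.Perm.inv_apply_self]

theorem D_mul {m : Equiv.Perm V} (hm : m ∈ M) {x y : V} (hxy : (x, y) ∈ Dset M u b0) :
    (m x, m y) ∈ Dset M u b0 := by
  obtain ⟨m1, hm1, a1, a2⟩ := hxy
  simp only at a1 a2
  exact ⟨m * m1, M.mul_mem hm hm1,
    by rw [Equiv.Perm.mul_apply, a1], by rw [Equiv.Perm.mul_apply, a2]⟩

theorem out_adj (h : Setup Γ G M u b0) {v y : V} (hy : y ∈ OutS M u b0 v) : Γ.Adj v y :=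
  mem_D_adj h hy

theorem in_adj (h : Setup Γ G M u b0) {v y : V} (hy : y ∈ InS M u b0 v) : Γ.Adj v y :=
  (mem_D_adj h hy).symm

theorem cover (h : Setup Γ G M u b0) {v y : V} (hy : Γ.Adj v y) :
    y ∈ OutS M u b0 v ∨ y ∈ InS M u b0 v := D_total h hy

theorem disj (h : Setup Γ G M u b0) {v y : V} (h1 : y ∈ OutS M u b0 v)
    (h2 : y ∈ InS M u b0 v) : False := D_antisym h h1 h2

theorem out_mul {m : Equiv.Perm V} (hm : m ∈ M) {v y : V} (hy : y ∈ OutS M u b0 v) :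
    m y ∈ OutS M u b0 (m v) := D_mul hm hy

theorem in_mul {m : Equiv.Perm V} (hm : m ∈ M) {v y : V} (hy : y ∈ InS M u b0 v) :
    m y ∈ InS M u b0 (m v) := D_mul hm hy

theorem out_nonempty (h : Setup Γ G M u b0) (v : V) : (OutS M u b0 v).Nonempty := by
  obtain ⟨m, hm, hmu⟩ := h.hVT u v
  exact ⟨m b0, ⟨m, hm, hmu, rfl⟩⟩

theorem in_nonempty (h : Setup Γ G M u b0) (v : V) : (InS M u b0 v).Nonempty := by
  obtain ⟨m, hm, hmb⟩ := h.hVT b0 v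
  exact ⟨m u, ⟨m, hm, rfl, hmb⟩⟩

theorem out_trans (h : Setup Γ G M u b0) {v y y' : V} (h1 : y ∈ OutS M u b0 v)
    (h2 : y' ∈ OutS M u b0 v) : ∃ m ∈ M, m v = v ∧ m y = y' := by
  obtain ⟨m1, hm1, a1, a2⟩ := h1
  obtain ⟨m2, hm2, c1, c2⟩ := h2
  simp only at a1 a2 c1 c2
  have e1 : m1⁻¹ v = u := m1.injective (by rw [Equiv.Perm.apply_inv_self, a1])
  have e2 : m1⁻¹ y = b0 := m1.injective (by rw [Equiv.Perm.apply_inv_self, a2])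
  refine ⟨m2 * m1⁻¹, M.mul_mem hm2 (M.inv_mem hm1), ?_, ?_⟩
  · rw [Equiv.Perm.mul_apply, e1, c1]
  · rw [Equiv.Perm.mul_apply, e2, c2]

theorem in_trans (h : Setup Γ G M u b0) {v y y' : V} (h1 : y ∈ InS M u b0 v)
    (h2 : y' ∈ InS M u b0 v) : ∃ m ∈ M, m v = v ∧ m y = y' := by
  obtain ⟨m1, hm1, a1, a2⟩ := h1
  obtain ⟨m2, hm2, c1, c2⟩ := h2
  simp only at a1 a2 c1 c2
  have e1 : m1⁻¹ v = b0 := m1.injective (by rw [Equiv.Perm.apply_inv_self, a2])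
  have e2 : m1⁻¹ y = u := m1.injective (by rw [Equiv.Perm.apply_inv_self, a1])
  refine ⟨m2 * m1⁻¹, M.mul_mem hm2 (M.inv_mem hm1), ?_, ?_⟩
  · rw [Equiv.Perm.mul_apply, e1, c2]
  · rw [Equiv.Perm.mul_apply, e2, c1]

theorem nbr_iff {k : Equiv.Perm V} (hk : k ∈ autGroup Γ)
    (hku : k u = u) : ∀ y : V, y ∈ Γ.neighborSet u ↔ k y ∈ Γ.neighborSet u := by
  intro y
  simp only [SimpleGraph.mem_neighborSet]
  conv_rhs => rw [← hku]
  exact (hk u y).symm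

theorem subtypePerm_inv_apply {p : V → Prop} (g : Equiv.Perm V)
    (hg : ∀ x, p (g x) ↔ p x) (z : {x // p x}) :
    (((g.subtypePerm hg)⁻¹ z : {x // p x}) : V) = g⁻¹ (z : V) := by
  have h1 : (g.subtypePerm hg) ((g.subtypePerm hg)⁻¹ z) = z :=
    Equiv.Perm.apply_inv_self _ _
  have h2 : g (((g.subtypePerm hg)⁻¹ z : {x // p x}) : V) = (z : V) :=
    congrArg Subtype.val h1
  rw [← h2, Equiv.Perm.inv_apply_self]

theorem conj_local (h : Setup Γ G M u b0) {k : Equiv.Perm V} (hk : k ∈ G) (hku : k u = u)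
    {m : Equiv.Perm V} (hm : m ∈ M) (hmu : m u = u) :
    ∃ m' ∈ M, m' u = u ∧ ∀ y ∈ Γ.neighborSet u, k (m (k⁻¹ y)) = m' y := by
  have pk := nbr_iff (Γ := Γ) (h.hG hk) hku
  have pm := nbr_iff (Γ := Γ) (h.hMaut hm) hmu
  set σ : Equiv.Perm (Γ.neighborSet u) := k.subtypePerm (fun y => (pk y).symm) with hσdef
  set τ : Equiv.Perm (Γ.neighborSet u) := m.subtypePerm (fun y => (pm y).symm) with hτdef
  have hσG : σ ∈ localGroup Γ G u := ⟨k, hk, hku, fun v => rfl⟩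
  have hτM : τ ∈ localGroup Γ M u := ⟨m, hm, hmu, fun v => rfl⟩
  obtain ⟨m', hm', hm'u, hagree⟩ := h.hnorm σ hσG τ hτM
  refine ⟨m', hm', hm'u, fun y hy => ?_⟩
  have h2 := hagree ⟨y, hy⟩
  rw [Equiv.Perm.mul_apply, Equiv.Perm.mul_apply] at h2
  have e1 : ((σ⁻¹ ⟨y, hy⟩ : Γ.neighborSet u) : V) = k⁻¹ y :=
    subtypePerm_inv_apply k (fun y => (pk y).symm) ⟨y, hy⟩
  have hval : ((σ (τ (σ⁻¹ ⟨y, hy⟩)) : Γ.neighborSet u) : V) = k (m (k⁻¹ y)) := by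
    rw [hσdef, hτdef]
    rw [Equiv.Perm.subtypePerm_apply, Equiv.Perm.subtypePerm_apply]
    simp only
    rw [e1]
  rw [← hval, h2]

/-- The local dichotomy at `u`, from normality. -/
theorem loc_dich (h : Setup Γ G M u b0) {k : Equiv.Perm V} (hk : k ∈ G) (hku : k u = u) :
    ((∀ y ∈ OutS M u b0 u, k y ∈ OutS M u b0 u) ∧ (∀ y ∈ InS M u b0 u, k y ∈ InS M u b0 u)) ∨
    ((∀ y ∈ OutS M u b0 u, k y ∈ InS M u b0 u) ∧ (∀ y ∈ InS M u b0 u, k y ∈ OutS M u b0 u)) := by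
  have hkaut := h.hG hk
  have hk'aut : k⁻¹ ∈ autGroup Γ := (autGroup Γ).inv_mem hkaut
  have hk'u : k⁻¹ u = u := k.injective (by rw [Equiv.Perm.apply_inv_self, hku])
  obtain ⟨y0, hy0⟩ := out_nonempty h u
  obtain ⟨y1, hy1⟩ := in_nonempty h u
  have hy0n : y0 ∈ Γ.neighborSet u := out_adj h hy0
  have hy1n : y1 ∈ Γ.neighborSet u := in_adj h hy1
  have stepO : ∀ y ∈ OutS M u b0 u, ∃ m' ∈ M, m' u = u ∧ k y = m' (k y0) := by
    intro y hy
    obtain ⟨m, hm, hmu, hmy⟩ := out_trans h hy0 hy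
    obtain ⟨m', hm', hm'u, hcl⟩ := conj_local h hk hku hm hmu
    have hcy := hcl (k y0) ((nbr_iff (Γ := Γ) hkaut hku y0).mp hy0n)
    rw [Equiv.Perm.inv_apply_self] at hcy
    rw [hmy] at hcy
    exact ⟨m', hm', hm'u, hcy⟩
  have stepI : ∀ y ∈ InS M u b0 u, ∃ m' ∈ M, m' u = u ∧ k y = m' (k y1) := by
    intro y hy
    obtain ⟨m, hm, hmu, hmy⟩ := in_trans h hy1 hy
    obtain ⟨m', hm', hm'u, hcl⟩ := conj_local h hk hku hm hmu
    have hcy := hcl (k y1) ((nbr_iff (Γ := Γ) hkaut hku y1).mp hy1n)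
    rw [Equiv.Perm.inv_apply_self] at hcy
    rw [hmy] at hcy
    exact ⟨m', hm', hm'u, hcy⟩
  have hadj0 : Γ.Adj u (k y0) := (nbr_iff (Γ := Γ) hkaut hku y0).mp hy0n
  have hadj1 : Γ.Adj u (k y1) := (nbr_iff (Γ := Γ) hkaut hku y1).mp hy1n
  have subO : (∀ y ∈ OutS M u b0 u, k y ∈ OutS M u b0 u) ∨
      (∀ y ∈ OutS M u b0 u, k y ∈ InS M u b0 u) := by
    rcases cover h hadj0 with hc | hc
    · left; intro y hy
      obtain ⟨m', hm', hm'u, he⟩ := stepO y hy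
      rw [he]
      have h3 := out_mul hm' hc
      rwa [hm'u] at h3
    · right; intro y hy
      obtain ⟨m', hm', hm'u, he⟩ := stepO y hy
      rw [he]
      have h3 := in_mul hm' hc
      rwa [hm'u] at h3
  have subI : (∀ y ∈ InS M u b0 u, k y ∈ OutS M u b0 u) ∨
      (∀ y ∈ InS M u b0 u, k y ∈ InS M u b0 u) := by
    rcases cover h hadj1 with hc | hc
    · left; intro y hy
      obtain ⟨m', hm', hm'u, he⟩ := stepI y hy
      rw [he]
      have h3 := out_mul hm' hc
      rwa [hm'u] at h3
    · right; intro y hy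
      obtain ⟨m', hm', hm'u, he⟩ := stepI y hy
      rw [he]
      have h3 := in_mul hm' hc
      rwa [hm'u] at h3
  rcases subO with hOO | hOI <;> rcases subI with hIO | hII
  · -- O→O and I→O : impossible
    exfalso
    have hadj' : Γ.Adj u (k⁻¹ y1) := (nbr_iff (Γ := Γ) hk'aut hk'u y1).mp hy1n
    have hmem : k (k⁻¹ y1) ∈ OutS M u b0 u := by
      rcases cover h hadj' with hc | hc
      · exact hOO _ hc
      · exact hIO _ hc
    rw [Equiv.Perm.apply_inv_self] at hmem
    exact disj h hmem hy1
  · exact Or.inl ⟨hOO, hII⟩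
  · exact Or.inr ⟨hOI, hIO⟩
  · -- O→I and I→I : impossible
    exfalso
    have hadj' : Γ.Adj u (k⁻¹ y0) := (nbr_iff (Γ := Γ) hk'aut hk'u y0).mp hy0n
    have hmem : k (k⁻¹ y0) ∈ InS M u b0 u := by
      rcases cover h hadj' with hc | hc
      · exact hOI _ hc
      · exact hII _ hc
    rw [Equiv.Perm.apply_inv_self] at hmem
    exact disj h hy0 hmem

/-- The dichotomy transported to an arbitrary vertex. -/
theorem trans_dich (h : Setup Γ G M u b0) {g : Equiv.Perm V} (hg : g ∈ G) (v : V) :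
    ((∀ y ∈ OutS M u b0 v, g y ∈ OutS M u b0 (g v)) ∧
      (∀ y ∈ InS M u b0 v, g y ∈ InS M u b0 (g v))) ∨
    ((∀ y ∈ OutS M u b0 v, g y ∈ InS M u b0 (g v)) ∧
      (∀ y ∈ InS M u b0 v, g y ∈ OutS M u b0 (g v))) := by
  obtain ⟨m, hm, hmu⟩ := h.hVT u v
  obtain ⟨m2, hm2, hm2u⟩ := h.hVT u (g v)
  have hkG : m2⁻¹ * g * m ∈ G :=
    G.mul_mem (G.mul_mem (G.inv_mem (h.hMG hm2)) hg) (h.hMG hm)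
  have hku : (m2⁻¹ * g * m) u = u := by
    rw [Equiv.Perm.mul_apply, Equiv.Perm.mul_apply, hmu, ← hm2u, Equiv.Perm.inv_apply_self]
  have key : ∀ y, g y = m2 ((m2⁻¹ * g * m) (m⁻¹ y)) := by
    intro y
    simp only [Equiv.Perm.mul_apply]
    rw [Equiv.Perm.apply_inv_self, Equiv.Perm.apply_inv_self]
  have hOv : ∀ y ∈ OutS M u b0 v, m⁻¹ y ∈ OutS M u b0 u := by
    intro y hy
    have h3 := out_mul (M.inv_mem hm) hy
    rwa [← hmu, Equiv.Perm.inv_apply_self] at h3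
  have hIv : ∀ y ∈ InS M u b0 v, m⁻¹ y ∈ InS M u b0 u := by
    intro y hy
    have h3 := in_mul (M.inv_mem hm) hy
    rwa [← hmu, Equiv.Perm.inv_apply_self] at h3
  rcases loc_dich h hkG hku with ⟨hOO, hII⟩ | ⟨hOI, hIO⟩
  · left
    constructor
    · intro y hy
      rw [key y]
      have h1 := hOO _ (hOv y hy)
      have h2 := out_mul hm2 h1
      rwa [hm2u] at h2
    · intro y hy
      rw [key y]
      have h1 := hII _ (hIv y hy)
      have h2 := in_mul hm2 h1
      rwa [hm2u] at h2
  · right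
    constructor
    · intro y hy
      rw [key y]
      have h1 := hOI _ (hOv y hy)
      have h2 := in_mul hm2 h1
      rwa [hm2u] at h2
    · intro y hy
      rw [key y]
      have h1 := hIO _ (hIv y hy)
      have h2 := out_mul hm2 h1
      rwa [hm2u] at h2

/-- `g` preserves the orientation at `v` (where `v = g (g⁻¹ v)`). -/
def Pres (M : Subgroup (Equiv.Perm V)) (u b0 : V) (g : Equiv.Perm V) (v : V) : Prop :=
  (∀ y ∈ OutS M u b0 (g⁻¹ v), g y ∈ OutS M u b0 v) ∧
  (∀ y ∈ InS M u b0 (g⁻¹ v), g y ∈ InS M u b0 v)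

theorem D_pres (h : Setup Γ G M u b0) (hconn : Γ.Connected) {g : Equiv.Perm V}
    (hg : g ∈ G) (hgu : g u = u) (hfix : ∀ z ∈ Γ.neighborSet u, g z = z) :
    ∀ x y : V, (x, y) ∈ Dset M u b0 → (g x, g y) ∈ Dset M u b0 := by
  have hgaut := h.hG hg
  have hg'aut := (autGroup Γ).inv_mem hgaut
  have hg'u : g⁻¹ u = u := g.injective (by rw [Equiv.Perm.apply_inv_self, hgu])
  have hbase : Pres M u b0 g u := by
    constructor
    · intro y hy
      rw [hg'u] at hy
      rw [hfix y (out_adj h hy)]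
      exact hy
    · intro y hy
      rw [hg'u] at hy
      rw [hfix y (in_adj h hy)]
      exact hy
  have hclosed : ∀ v w, Pres M u b0 g v → Γ.Adj v w → Pres M u b0 g w := by
    intro v w hAv hadj
    have hdich := trans_dich h hg (g⁻¹ w)
    rw [Equiv.Perm.apply_inv_self] at hdich
    rcases hdich with hgood | ⟨hOI, hIO⟩
    · exact hgood
    · exfalso
      have hadj2 : Γ.Adj (g⁻¹ w) (g⁻¹ v) := (hg'aut w v).mpr hadj.symm
      rcases D_total h hadj with hvw | hwv
      · -- (v, w) ∈ D
        have h1 : g⁻¹ w ∈ OutS M u b0 (g⁻¹ v) := by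
          have hzadj : Γ.Adj (g⁻¹ v) (g⁻¹ w) := (hg'aut v w).mpr hadj
          rcases cover h hzadj with hc | hc
          · exact hc
          · exfalso
            have h4 := hAv.2 _ hc
            rw [Equiv.Perm.apply_inv_self] at h4
            exact disj h hvw h4
        rcases cover h hadj2 with hc | hc
        · exact D_antisym h h1 hc
        · have h4 := hIO _ hc
          rw [Equiv.Perm.apply_inv_self] at h4
          exact disj h h4 hvw
      · -- (w, v) ∈ D
        have h1 : g⁻¹ w ∈ InS M u b0 (g⁻¹ v) := by
          have hzadj : Γ.Adj (g⁻¹ v) (g⁻¹ w) := (hg'aut v w).mpr hadj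
          rcases cover h hzadj with hc | hc
          · exfalso
            have h4 := hAv.1 _ hc
            rw [Equiv.Perm.apply_inv_self] at h4
            exact disj h h4 hwv
          · exact hc
        rcases cover h hadj2 with hc | hc
        · have h4 := hOI _ hc
          rw [Equiv.Perm.apply_inv_self] at h4
          exact disj h hwv h4
        · exact D_antisym h hc h1
  have hall : ∀ v, Pres M u b0 g v := by
    have hstep : ∀ (x y : V), Γ.Walk x y → Pres M u b0 g x → Pres M u b0 g y := by
      intro x y p
      induction p with
      | nil => exact id
      | cons hadj q ih => exact fun hx => ih (hclosed _ _ hx hadj)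
    intro v
    obtain ⟨p⟩ := hconn.preconnected u v
    exact hstep u v p hbase
  intro x y hxy
  have h1 := (hall (g x)).1 y
  rw [Equiv.Perm.inv_apply_self] at h1
  exact h1 hxy

/-- The stabiliser in `G` of the orientation `Dset`. -/
def stabD (G M : Subgroup (Equiv.Perm V)) (u b0 : V) : Subgroup (Equiv.Perm V) where
  carrier := {g | g ∈ G ∧ ∀ x y : V, (x, y) ∈ Dset M u b0 ↔ (g x, g y) ∈ Dset M u b0}
  one_mem' := ⟨G.one_mem, fun x y => by simp⟩
  mul_mem' := by
    rintro a b ⟨haG, ha⟩ ⟨hbG, hb⟩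
    refine ⟨G.mul_mem haG hbG, fun x y => ?_⟩
    simp only [Equiv.Perm.mul_apply]
    exact (hb x y).trans (ha (b x) (b y))
  inv_mem' := by
    rintro a ⟨haG, ha⟩
    refine ⟨G.inv_mem haG, fun x y => ?_⟩
    have h3 := ha (a⁻¹ x) (a⁻¹ y)
    rw [Equiv.Perm.apply_inv_self, Equiv.Perm.apply_inv_self] at h3
    exact h3.symm

theorem M_le_stabD (h : Setup Γ G M u b0) : M ≤ stabD G M u b0 := by
  intro m hm
  refine ⟨h.hMG hm, fun x y => ⟨fun hd => D_mul hm hd, fun hd => ?_⟩⟩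
  have h3 := D_mul (M.inv_mem hm) hd
  rwa [Equiv.Perm.inv_apply_self, Equiv.Perm.inv_apply_self] at h3

theorem stabD_eq (h : Setup Γ G M u b0)
    (hmax : ∀ N : Subgroup (Equiv.Perm V), M ≤ N → N ≤ G → HalfArcTransitive Γ N → N = M) :
    stabD G M u b0 = M := by
  have hle : stabD G M u b0 ≤ G := fun g hg => hg.1
  refine hmax _ (M_le_stabD h) hle ⟨hle.trans h.hG, ?_, ?_, ?_⟩
  · intro x y
    obtain ⟨m, hm, he⟩ := h.hVT x y
    exact ⟨m, M_le_stabD h hm, he⟩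
  · intro x y z w hxy hzw
    obtain ⟨m, hm, he⟩ := h.hET x y z w hxy hzw
    exact ⟨m, M_le_stabD h hm, he⟩
  · intro hat
    obtain ⟨g, hgN, e1, e2⟩ := hat u b0 b0 u h.adj h.adj.symm
    obtain ⟨hgG, hgD⟩ := hgN
    have hub : (u, b0) ∈ Dset M u b0 := ⟨1, M.one_mem, by simp, by simp⟩
    have h3 := (hgD u b0).mp hub
    rw [e1, e2] at h3
    exact D_antisym h hub h3

theorem mem_of_fix (h : Setup Γ G M u b0) (hconn : Γ.Connected)
    (hmax : ∀ N : Subgroup (Equiv.Perm V), M ≤ N → N ≤ G → HalfArcTransitive Γ N → N = M)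
    {g : Equiv.Perm V} (hg : g ∈ G) (hgu : g u = u)
    (hfix : ∀ z ∈ Γ.neighborSet u, g z = z) : g ∈ M := by
  have hg' : g⁻¹ ∈ G := G.inv_mem hg
  have hg'u : g⁻¹ u = u := g.injective (by rw [Equiv.Perm.apply_inv_self, hgu])
  have hfix' : ∀ z ∈ Γ.neighborSet u, g⁻¹ z = z := by
    intro z hz
    have h3 := hfix z hz
    conv_lhs => rw [← h3]
    rw [Equiv.Perm.inv_apply_self]
  rw [← stabD_eq h hmax]
  refine ⟨hg, fun x y => ⟨fun hd => D_pres h hconn hg hgu hfix x y hd, fun hd => ?_⟩⟩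
  have h3 := D_pres h hconn hg' hg'u hfix' (g x) (g y) hd
  rwa [Equiv.Perm.inv_apply_self, Equiv.Perm.inv_apply_self] at h3

/-- First index equality: `|G : M| = |G_u : M_u|`. -/
theorem relIndexA (G M : Subgroup (Equiv.Perm V)) (u : V) (hMG : M ≤ G)
    (hVT : ∀ x y : V, ∃ g ∈ M, g x = y) :
    M.relIndex G =
      (M ⊓ MulAction.stabilizer (Equiv.Perm V) u).relIndex
        (G ⊓ MulAction.stabilizer (Equiv.Perm V) u) := by
  set S := MulAction.stabilizer (Equiv.Perm V) u with hS
  have hGS : G ⊓ S ≤ G := inf_le_left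
  let f : (↥(G ⊓ S) ⧸ (M ⊓ S).subgroupOf (G ⊓ S)) → (↥G ⧸ M.subgroupOf G) :=
    fun q => Quotient.liftOn' q
      (fun x => QuotientGroup.mk (Subgroup.inclusion hGS x))
      (by
        intro a b hab
        rw [QuotientGroup.leftRel_apply, Subgroup.mem_subgroupOf] at hab
        apply Quotient.sound'
        rw [QuotientGroup.leftRel_apply, Subgroup.mem_subgroupOf]
        exact (Subgroup.mem_inf.mp hab).1)
  have hfbij : Function.Bijective f := by
    constructor
    · intro q1 q2
      refine Quotient.inductionOn₂' q1 q2 ?_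
      intro a b hab
      have hab' : (Subgroup.inclusion hGS a)⁻¹ * Subgroup.inclusion hGS b ∈
          M.subgroupOf G := by
        rw [← QuotientGroup.leftRel_apply]
        exact Quotient.exact' hab
      rw [Subgroup.mem_subgroupOf] at hab'
      have hab2 : ((↑a)⁻¹ * (↑b : Equiv.Perm V)) ∈ M := hab'
      apply Quotient.sound'
      rw [QuotientGroup.leftRel_apply, Subgroup.mem_subgroupOf]
      have hcoe2 : ((a⁻¹ * b : ↥(G ⊓ S)) : Equiv.Perm V) = (↑a)⁻¹ * ↑b := rfl
      rw [hcoe2, Subgroup.mem_inf]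
      refine ⟨hab2, ?_⟩
      have hau : (↑a : Equiv.Perm V) u = u := (Subgroup.mem_inf.mp a.2).2
      have hbu : (↑b : Equiv.Perm V) u = u := (Subgroup.mem_inf.mp b.2).2
      show ((↑a)⁻¹ * ↑b : Equiv.Perm V) u = u
      rw [Equiv.Perm.mul_apply, hbu]
      exact (↑a : Equiv.Perm V).injective (by rw [Equiv.Perm.apply_inv_self, hau])
    · intro q
      refine Quotient.inductionOn' q ?_
      intro x
      obtain ⟨m, hm, hmu⟩ := hVT u ((x : Equiv.Perm V)⁻¹ u)
      have hsmem : (↑x * m : Equiv.Perm V) ∈ G ⊓ S := by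
        rw [Subgroup.mem_inf]
        refine ⟨G.mul_mem x.2 (hMG hm), ?_⟩
        show ((↑x : Equiv.Perm V) * m) u = u
        rw [Equiv.Perm.mul_apply, hmu, Equiv.Perm.apply_inv_self]
      refine ⟨Quotient.mk'' ⟨(↑x : Equiv.Perm V) * m, hsmem⟩, ?_⟩
      show QuotientGroup.mk (Subgroup.inclusion hGS ⟨(↑x : Equiv.Perm V) * m, hsmem⟩) =
        Quotient.mk'' x
      apply Quotient.sound'
      rw [QuotientGroup.leftRel_apply, Subgroup.mem_subgroupOf]
      have hval : (((Subgroup.inclusion hGS ⟨(↑x : Equiv.Perm V) * m, hsmem⟩)⁻¹ * x : ↥G) :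
          Equiv.Perm V) = m⁻¹ := by
        show ((↑x : Equiv.Perm V) * m)⁻¹ * ↑x = m⁻¹
        group
      rw [hval]
      exact M.inv_mem hm
  have h5 : M.relIndex G = Nat.card (↥G ⧸ M.subgroupOf G) := rfl
  have h6 : (M ⊓ S).relIndex (G ⊓ S) =
      Nat.card (↥(G ⊓ S) ⧸ (M ⊓ S).subgroupOf (G ⊓ S)) := rfl
  rw [h5, h6]
  exact (Nat.card_congr (Equiv.ofBijective f hfbij)).symm

/-- Second index equality: `|G_u : M_u| = |G_u^{Γ(u)} : M_u^{Γ(u)}|`. -/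
theorem relIndexB (Γ : SimpleGraph V) (G M : Subgroup (Equiv.Perm V)) (u : V)
    (hG : G ≤ autGroup Γ) (hMG : M ≤ G)
    (hker : ∀ g ∈ G, g u = u → (∀ z ∈ Γ.neighborSet u, g z = z) → g ∈ M) :
    (M ⊓ MulAction.stabilizer (Equiv.Perm V) u).relIndex
        (G ⊓ MulAction.stabilizer (Equiv.Perm V) u) =
      (localGroup Γ M u).relIndex (localGroup Γ G u) := by
  set S := MulAction.stabilizer (Equiv.Perm V) u with hS
  have hmemG : ∀ x : ↥(G ⊓ S), (x : Equiv.Perm V) ∈ G := fun x => (Subgroup.mem_inf.mp x.2).1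
  have hmemu : ∀ x : ↥(G ⊓ S), (x : Equiv.Perm V) u = u :=
    fun x => (Subgroup.mem_inf.mp x.2).2
  have hpred : ∀ x : ↥(G ⊓ S), ∀ z : V,
      z ∈ Γ.neighborSet u ↔ (x : Equiv.Perm V) z ∈ Γ.neighborSet u := by
    intro x z
    simp only [SimpleGraph.mem_neighborSet]
    conv_rhs => rw [← hmemu x]
    exact (hG (hmemG x) u z).symm
  let res : ↥(G ⊓ S) → ↥(localGroup Γ G u) := fun x =>
    ⟨(x : Equiv.Perm V).subtypePerm (fun z => (hpred x z).symm), ⟨x, hmemG x, hmemu x, fun v => rfl⟩⟩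
  have hresval : ∀ (a b : ↥(G ⊓ S)) (v : Γ.neighborSet u),
      ((((res a)⁻¹ * res b : ↥(localGroup Γ G u)) : Equiv.Perm (Γ.neighborSet u)) v : V) =
        ((↑a)⁻¹ * (↑b : Equiv.Perm V)) (v : V) := by
    intro a b v
    exact subtypePerm_inv_apply (↑a : Equiv.Perm V) (fun z => (hpred a z).symm)
      ⟨(↑b : Equiv.Perm V) ↑v, (hpred b ↑v).mp v.2⟩
  have hrel : ∀ a b : ↥(G ⊓ S), (a⁻¹ * b ∈ (M ⊓ S).subgroupOf (G ⊓ S)) →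
      (res a)⁻¹ * res b ∈ (localGroup Γ M u).subgroupOf (localGroup Γ G u) := by
    intro a b hab
    rw [Subgroup.mem_subgroupOf] at hab ⊢
    obtain ⟨habM, habS⟩ := Subgroup.mem_inf.mp hab
    have habu : ((↑a)⁻¹ * (↑b : Equiv.Perm V)) u = u := habS
    exact ⟨(↑a)⁻¹ * ↑b, habM, habu, fun v => hresval a b v⟩
  let f : (↥(G ⊓ S) ⧸ (M ⊓ S).subgroupOf (G ⊓ S)) →
      (↥(localGroup Γ G u) ⧸ (localGroup Γ M u).subgroupOf (localGroup Γ G u)) :=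
    fun q => Quotient.liftOn' q (fun x => QuotientGroup.mk (res x))
      (by
        intro a b hab
        rw [QuotientGroup.leftRel_apply] at hab
        apply Quotient.sound'
        rw [QuotientGroup.leftRel_apply]
        exact hrel a b hab)
  have hfbij : Function.Bijective f := by
    constructor
    · intro q1 q2
      refine Quotient.inductionOn₂' q1 q2 ?_
      intro a b hab
      have hab' : (res a)⁻¹ * res b ∈
          (localGroup Γ M u).subgroupOf (localGroup Γ G u) := by
        rw [← QuotientGroup.leftRel_apply]
        exact Quotient.exact' hab
      rw [Subgroup.mem_subgroupOf] at hab'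
      obtain ⟨m, hmM, hmu, hag⟩ := hab'
      apply Quotient.sound'
      rw [QuotientGroup.leftRel_apply, Subgroup.mem_subgroupOf]
      have ht : ((a⁻¹ * b : ↥(G ⊓ S)) : Equiv.Perm V) = (↑a)⁻¹ * ↑b := rfl
      rw [ht, Subgroup.mem_inf]
      have habu : ((↑a)⁻¹ * (↑b : Equiv.Perm V)) u = u := by
        rw [Equiv.Perm.mul_apply, hmemu b]
        exact (↑a : Equiv.Perm V).injective
          (by rw [Equiv.Perm.apply_inv_self, hmemu a])
      constructor
      · -- use hker on m⁻¹ * ((↑a)⁻¹ * ↑b)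
        have hgm : m⁻¹ * ((↑a)⁻¹ * (↑b : Equiv.Perm V)) ∈ G :=
          G.mul_mem (G.inv_mem (hMG hmM)) (G.mul_mem (G.inv_mem (hmemG a)) (hmemG b))
        have hgu : (m⁻¹ * ((↑a)⁻¹ * (↑b : Equiv.Perm V))) u = u := by
          rw [Equiv.Perm.mul_apply, habu]
          exact m.injective (by rw [Equiv.Perm.apply_inv_self, hmu])
        have hfx : ∀ z ∈ Γ.neighborSet u,
            (m⁻¹ * ((↑a)⁻¹ * (↑b : Equiv.Perm V))) z = z := by
          intro z hz
          have h7 := hag ⟨z, hz⟩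
          rw [hresval a b ⟨z, hz⟩] at h7
          rw [Equiv.Perm.mul_apply, h7, Equiv.Perm.inv_apply_self]
        have hMmem := hker _ hgm hgu hfx
        have : (↑a)⁻¹ * (↑b : Equiv.Perm V) = m * (m⁻¹ * ((↑a)⁻¹ * ↑b)) := by group
        rw [this]
        exact M.mul_mem hmM hMmem
      · exact habu
    · intro q
      refine Quotient.inductionOn' q ?_
      intro σ'
      obtain ⟨g, hgG, hgu, hagg⟩ := σ'.2
      have hgS : g ∈ G ⊓ S := by
        rw [Subgroup.mem_inf]
        exact ⟨hgG, hgu⟩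
      refine ⟨Quotient.mk'' ⟨g, hgS⟩, ?_⟩
      show QuotientGroup.mk (res ⟨g, hgS⟩) = Quotient.mk'' σ'
      have hres_eq : res ⟨g, hgS⟩ = σ' := by
        apply Subtype.ext
        apply Equiv.ext
        intro v
        apply Subtype.ext
        show g (v : V) = ((σ' : Equiv.Perm (Γ.neighborSet u)) v : V)
        exact (hagg v).symm
      rw [hres_eq]
  have h5 : (M ⊓ S).relIndex (G ⊓ S) =
      Nat.card (↥(G ⊓ S) ⧸ (M ⊓ S).subgroupOf (G ⊓ S)) := rfl
  have h6 : (localGroup Γ M u).relIndex (localGroup Γ G u) =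
      Nat.card (↥(localGroup Γ G u) ⧸ (localGroup Γ M u).subgroupOf (localGroup Γ G u)) := rfl
  rw [h5, h6]
  exact Nat.card_congr (Equiv.ofBijective f hfbij)

end HAT6

/-- Lemma 3.2(c): for a connected tetravalent `G`-arc-transitive graph with `M ≤ G`
maximal subject to `Γ` being `M`-half-arc-transitive and `M_u^{Γ(u)} ⊴ G_u^{Γ(u)}`,
one has `|G : M| = |G_u : M_u| = |G_u^{Γ(u)} : M_u^{Γ(u)}|`. -/
theorem statement6 {V : Type*} [Fintype V] (Γ : SimpleGraph V)
    (hconn : Γ.Connected) (htetra : Tetravalent Γ)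
    (G : Subgroup (Equiv.Perm V)) (hG : G ≤ autGroup Γ) (hAT : ArcTransitive Γ G)
    (u : V) (M : Subgroup (Equiv.Perm V)) (hMG : M ≤ G)
    (hhat : HalfArcTransitive Γ M)
    (hmax : ∀ N : Subgroup (Equiv.Perm V), M ≤ N → N ≤ G → HalfArcTransitive Γ N → N = M)
    (hnormal : NormalIn (localGroup Γ M u) (localGroup Γ G u)) :
    M.relIndex G =
      (M ⊓ MulAction.stabilizer (Equiv.Perm V) u).relIndex
        (G ⊓ MulAction.stabilizer (Equiv.Perm V) u) ∧
    (M ⊓ MulAction.stabilizer (Equiv.Perm V) u).relIndex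
        (G ⊓ MulAction.stabilizer (Equiv.Perm V) u) =
      (localGroup Γ M u).relIndex (localGroup Γ G u) := by
  obtain ⟨hMaut, hVT, hET, hNAT⟩ := hhat
  have hb0ex : (Γ.neighborSet u).Nonempty :=
    Set.nonempty_of_ncard_ne_zero (by rw [htetra u]; norm_num)
  obtain ⟨b0, hb0mem⟩ := hb0ex
  have hst : HAT6.Setup Γ G M u b0 := ⟨hb0mem, hG, hMG, hVT, hET, hNAT, hnormal⟩
  have hker : ∀ g ∈ G, g u = u → (∀ z ∈ Γ.neighborSet u, g z = z) → g ∈ M :=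
    fun g hg hgu hfix => HAT6.mem_of_fix hst hconn hmax hg hgu hfix
  exact ⟨HAT6.relIndexA G M u hMG hVT, HAT6.relIndexB Γ G M u hG hMG hker⟩
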